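/- The set of full-rank free K(t)⁻-submodules of K(t)ⁿ, ordered by inclusion, is a modular lattice in which meet is intersection and join is sum, and L ↦ deg L (= deg det of any basis matrix) is a valuation: deg L + deg M = deg(L ∩ M) + deg(L + M), and L ⊊ M implies deg L < deg M. -/

import Mathlib

set_option maxHeartbeats 1000000
set_option synthInstance.maxHeartbeats 1000000

/-- The valuation ring `K(t)⁻` of proper rational functions, i.e. those of degree `≤ 0`. -/
noncomputable def properSubring (K : Type*) [Field K] : Subring (RatFunc K) where
  carrier := {f | f.intDegree ≤ 0}
  zero_mem' := by simp [Set.mem_setOf_eq, RatFunc.intDegree_zero]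
  one_mem' := by simp [Set.mem_setOf_eq, RatFunc.intDegree_one]
  add_mem' := by
    intro a b ha hb
    simp only [Set.mem_setOf_eq] at *
    rcases eq_or_ne (a + b) 0 with h | h
    · simp [h, RatFunc.intDegree_zero]
    rcases eq_or_ne b 0 with hb0 | hb0
    · simpa [hb0] using ha
    · exact le_trans (RatFunc.intDegree_add_le hb0 h) (max_le ha hb)
  neg_mem' := by
    intro a ha
    simpa only [Set.mem_setOf_eq, RatFunc.intDegree_neg] using ha
  mul_mem' := by
    intro a b ha hb
    simp only [Set.mem_setOf_eq] at *
    rcases eq_or_ne a 0 with h | h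
    · simp [h, RatFunc.intDegree_zero]
    rcases eq_or_ne b 0 with h' | h'
    · simp [h', RatFunc.intDegree_zero]
    · rw [RatFunc.intDegree_mul h h']; omega

/-- The full-rank free `K(t)⁻`-submodule `⟨P⟩ = {Pλ : λ ∈ (K(t)⁻)ⁿ}` of `K(t)ⁿ` spanned by
the columns of a matrix `P`. -/
noncomputable def spanCols {K : Type*} [Field K] {n : ℕ}
    (P : Matrix (Fin n) (Fin n) (RatFunc K)) :
    Submodule (properSubring K) (Fin n → RatFunc K) :=
  Submodule.span (properSubring K) (Set.range fun j => fun i => P i j)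

/-- A full-rank free `K(t)⁻`-submodule of `K(t)ⁿ`: one of the form `⟨P⟩` for a
nonsingular matrix `P` over `K(t)`. -/
def IsFullFree {K : Type*} [Field K] {n : ℕ}
    (M : Submodule (properSubring K) (Fin n → RatFunc K)) : Prop :=
  ∃ P : Matrix (Fin n) (Fin n) (RatFunc K), P.det ≠ 0 ∧ M = spanCols P

/-- `deg L := deg det P` for a full-rank free submodule `L = ⟨P⟩`. -/
noncomputable def degMod {K : Type*} [Field K] {n : ℕ}
    (M : Submodule (properSubring K) (Fin n → RatFunc K)) : ℤ := by
  classical exact if h : IsFullFree M then (Classical.choose h).det.intDegree else 0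

/-!
Any two full-rank lattices `L = ⟨P⟩`, `M = ⟨Q⟩` over the PID `K(t)⁻` admit a common adapted
basis: by the Smith normal form of `⟨c Q⟩ ⊆ ⟨P⟩` (for a suitable scalar `c ≠ 0`) there are `B` and
a diagonal `e` with `L = ⟨B⟩` and `M = ⟨B e⟩`. Since `K(t)⁻` is a valuation ring, coordinatewise
either `1 ∣ e_j` or `e_j ∣ 1`, so `L ∩ M = ⟨B g⟩` and `L + M = ⟨B h⟩` with `{g_j, h_j} = {1, e_j}`;
hence `g_j h_j = e_j` and the degree identity is the multiplicativity of `det`. Degree is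
monotone because `⟨P⟩ ⊆ ⟨Q⟩` means `P = Q A` with `A` integral, and strictly so because
`deg det A = 0` makes `A` invertible over `K(t)⁻`.
-/

open Matrix

section ColumnLattices

variable {F : Type*} [Field F] (R : Subring F) {ι : Type*}

/-- `spanCols P` is `colSpan (properSubring K) P` by definition. -/
def colSpan (P : Matrix ι ι F) : Submodule R (ι → F) :=
  Submodule.span R (Set.range P.col)

variable {R}

theorem col_mem_colSpan (P : Matrix ι ι F) (j : ι) : P.col j ∈ colSpan R P :=
  Submodule.subset_span ⟨j, rfl⟩

theorem colSpan_smul (c : F) (P : Matrix ι ι F) :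
    colSpan R (c • P) = (colSpan R P).map (DistribSMul.toLinearMap R (ι → F) c) := by
  rw [colSpan, colSpan, Submodule.map_span, ← Set.range_comp]
  rfl

theorem Submodule.span_range_coe_basis {S M : Type*} [Ring S] [AddCommGroup M] [Module S M]
    {N : Submodule S M} (b : Module.Basis ι S N) :
    Submodule.span S (Set.range fun i => (b i : M)) = N := by
  have := congrArg (Submodule.map N.subtype) b.span_eq
  rwa [Submodule.map_span, Submodule.map_top, Submodule.range_subtype, ← Set.range_comp] at this

variable [Fintype ι]

theorem mem_colSpan {P : Matrix ι ι F} {v : ι → F} :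
    v ∈ colSpan R P ↔ ∃ c : ι → R, P *ᵥ (fun j => (c j : F)) = v := by
  rw [colSpan, Submodule.mem_span_range_iff_exists_fun]
  refine exists_congr fun c => Eq.congr_left ?_
  ext i
  simp [mulVec, dotProduct, mul_comm, Finset.sum_apply, Subring.smul_def]

variable [DecidableEq ι]

theorem colSpan_le_iff {P Q : Matrix ι ι F} :
    colSpan R P ≤ colSpan R Q ↔ ∃ A : Matrix ι ι R, P = Q * R.subtype.mapMatrix A := by
  constructor
  · intro h
    choose c hc using fun j => mem_colSpan.1 (h (col_mem_colSpan P j))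
    refine ⟨Matrix.of fun k j => c j k, ?_⟩
    ext i j
    simpa [mul_apply, mulVec, dotProduct] using (congrFun (hc j) i).symm
  · rintro ⟨A, rfl⟩
    refine Submodule.span_le.2 ?_
    rintro - ⟨j, rfl⟩
    refine mem_colSpan.2 ⟨fun k => A k j, ?_⟩
    ext i
    simp [mul_apply, mulVec, dotProduct]

theorem colSpan_mul_of_isUnit (Q : Matrix ι ι F) {A : Matrix ι ι R} (hA : IsUnit A) :
    colSpan R (Q * R.subtype.mapMatrix A) = colSpan R Q := by
  refine (colSpan_le_iff.2 ⟨A, rfl⟩).antisymm (colSpan_le_iff.2 ⟨A⁻¹, ?_⟩)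
  rw [Matrix.mul_assoc, ← map_mul, mul_nonsing_inv _ ((A.isUnit_iff_isUnit_det).1 hA), map_one,
    Matrix.mul_one]

theorem det_ne_zero_of_colSpan_le {P Q : Matrix ι ι F} (hP : P.det ≠ 0)
    (h : colSpan R P ≤ colSpan R Q) : Q.det ≠ 0 := by
  obtain ⟨A, rfl⟩ := colSpan_le_iff.1 h
  exact left_ne_zero_of_mul (det_mul Q _ ▸ hP)

theorem linearIndependent_col {P : Matrix ι ι F} (hP : P.det ≠ 0) :
    LinearIndependent R P.col :=
  (linearIndependent_cols_iff_isUnit.2 ((P.isUnit_iff_isUnit_det).2 hP.isUnit)).restrict_scalars' R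

theorem finrank_colSpan {P : Matrix ι ι F} (hP : P.det ≠ 0) :
    Module.finrank R (colSpan R P) = Fintype.card ι :=
  Module.finrank_eq_card_basis (Module.Basis.span (linearIndependent_col hP))

theorem exists_colSpan_eq_mul_diagonal_of_le [IsPrincipalIdealRing R] {P Q : Matrix ι ι F}
    (hP : P.det ≠ 0) (hQ : Q.det ≠ 0) (hQP : colSpan R Q ≤ colSpan R P) :
    ∃ (B : Matrix ι ι F) (a : ι → R),
      colSpan R P = colSpan R B ∧ colSpan R Q = colSpan R (B * diagonal fun j => (a j : F)) := by
  set L := colSpan R P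
  set N := (colSpan R Q).comap L.subtype
  have hrank : Module.finrank R N = Module.finrank R L := by
    rw [(Submodule.comapSubtypeEquivOfLe hQP).finrank_eq, finrank_colSpan hQ, finrank_colSpan hP]
  obtain ⟨bL, a, bN, hsnf⟩ := Submodule.exists_smith_normal_form_of_rank_eq
    (Module.Basis.span (linearIndependent_col hP)) hrank
  refine ⟨Matrix.of fun i j => (bL j : ι → F) i, a, (Submodule.span_range_coe_basis bL).symm, ?_⟩
  have hcol : (Matrix.of fun i j => (bL j : ι → F) i) * (diagonal fun j => (a j : F)) =
      Matrix.of fun i j => ((bN j : L) : ι → F) i := by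
    ext i j
    simp [mul_diagonal, hsnf, mul_comm, Subring.smul_def]
  have hN := congrArg (Submodule.map L.subtype) (Submodule.span_range_coe_basis bN)
  rw [Submodule.map_span, ← Set.range_comp, Submodule.map_comap_subtype, inf_eq_right.2 hQP] at hN
  rw [hcol, ← hN]
  rfl

theorem exists_smul_eq_mapMatrix [IsFractionRing R F] (A : Matrix ι ι F) :
    ∃ d : F, d ≠ 0 ∧ ∃ A' : Matrix ι ι R, d • A = R.subtype.mapMatrix A' := by
  obtain ⟨⟨d, hd⟩, hA⟩ := IsLocalization.exist_integer_multiples_of_finite (nonZeroDivisors R)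
    fun p : ι × ι => A p.1 p.2
  choose A' hA' using hA
  refine ⟨d, by simpa using nonZeroDivisors.ne_zero hd, Matrix.of fun i j => A' (i, j), ?_⟩
  ext i j
  exact (hA' (i, j)).symm

theorem exists_colSpan_eq_mul_diagonal [IsPrincipalIdealRing R] [IsFractionRing R F]
    {P Q : Matrix ι ι F} (hP : P.det ≠ 0) (hQ : Q.det ≠ 0) :
    ∃ (B : Matrix ι ι F) (e : ι → F),
      colSpan R P = colSpan R B ∧ colSpan R Q = colSpan R (B * diagonal e) := by
  obtain ⟨d, hd, A, hA⟩ := exists_smul_eq_mapMatrix (R := R) (P⁻¹ * Q)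
  have hdQ : colSpan R (d • Q) ≤ colSpan R P := colSpan_le_iff.2 ⟨A, by
    rw [← hA, Matrix.mul_smul, ← Matrix.mul_assoc, mul_nonsing_inv _ hP.isUnit, Matrix.one_mul]⟩
  obtain ⟨B, a, hPB, hQB⟩ := exists_colSpan_eq_mul_diagonal_of_le hP
    (by rw [det_smul]; exact mul_ne_zero (pow_ne_zero _ hd) hQ) hdQ
  refine ⟨B, d⁻¹ • fun j => (a j : F), hPB, ?_⟩
  have := congrArg (Submodule.map (DistribSMul.toLinearMap R (ι → F) d⁻¹)) hQB
  rwa [← colSpan_smul, ← colSpan_smul, smul_smul, inv_mul_cancel₀ hd, one_smul, ← Matrix.mul_smul,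
    ← diagonal_smul] at this

theorem colSpan_mul_diagonal_le (B : Matrix ι ι F) {a b : ι → F} (h : ∀ j, a j ∈ R ∙ b j) :
    colSpan R (B * diagonal a) ≤ colSpan R (B * diagonal b) := by
  choose r hr using fun j => Submodule.mem_span_singleton.1 (h j)
  refine colSpan_le_iff.2 ⟨diagonal r, ?_⟩
  rw [RingHom.mapMatrix_apply, diagonal_map (map_zero _), Matrix.mul_assoc,
    diagonal_mul_diagonal]
  refine congrArg (B * diagonal ·) (funext fun j => ?_)
  rw [← hr j, Subring.smul_def, smul_eq_mul, mul_comm]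
  rfl

theorem colSpan_mul_diagonal_inf {B : Matrix ι ι F} (hB : B.det ≠ 0) {a b c : ι → F}
    (hc : ∀ j, c j = a j ∨ c j = b j) (hca : ∀ j, c j ∈ R ∙ a j) (hcb : ∀ j, c j ∈ R ∙ b j) :
    colSpan R (B * diagonal a) ⊓ colSpan R (B * diagonal b) = colSpan R (B * diagonal c) := by
  refine le_antisymm ?_ (le_inf (colSpan_mul_diagonal_le B hca) (colSpan_mul_diagonal_le B hcb))
  rintro v ⟨hva, hvb⟩
  obtain ⟨x, rfl⟩ := mem_colSpan.1 hva
  obtain ⟨y, hxy⟩ := mem_colSpan.1 hvb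
  rw [← mulVec_mulVec, ← mulVec_mulVec] at hxy
  have hcoord := congrFun
    ((mulVec_injective_iff_isUnit.2 ((B.isUnit_iff_isUnit_det).2 hB.isUnit)) hxy)
  simp only [mulVec_diagonal] at hcoord
  classical
  refine mem_colSpan.2 ⟨fun j => if c j = a j then x j else y j, ?_⟩
  rw [← mulVec_mulVec, ← mulVec_mulVec]
  refine congrArg (B *ᵥ ·) (funext fun j => ?_)
  simp only [mulVec_diagonal]
  split_ifs with h
  · rw [h]
  · rw [(hc j).resolve_left h, hcoord]

theorem colSpan_mul_diagonal_sup (B : Matrix ι ι F) {a b c : ι → F}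
    (hc : ∀ j, c j = a j ∨ c j = b j) (hac : ∀ j, a j ∈ R ∙ c j) (hbc : ∀ j, b j ∈ R ∙ c j) :
    colSpan R (B * diagonal a) ⊔ colSpan R (B * diagonal b) = colSpan R (B * diagonal c) := by
  refine le_antisymm (sup_le (colSpan_mul_diagonal_le B hac) (colSpan_mul_diagonal_le B hbc))
    (Submodule.span_le.2 ?_)
  rintro - ⟨j, rfl⟩
  have hcol : ∀ d : ι → F, c j = d j → (B * diagonal c).col j = (B * diagonal d).col j := by
    intro d hd
    ext i
    simp [mul_diagonal, hd]
  rcases hc j with h | h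
  · exact Submodule.mem_sup_left (hcol a h ▸ col_mem_colSpan _ j)
  · exact Submodule.mem_sup_right (hcol b h ▸ col_mem_colSpan _ j)

theorem mem_span_singleton_total (hR : ∀ x : F, x ∈ R ∨ x⁻¹ ∈ R) (a b : F) :
    a ∈ R ∙ b ∨ b ∈ R ∙ a := by
  rcases eq_or_ne a 0 with rfl | ha
  · exact Or.inl (zero_mem _)
  rcases eq_or_ne b 0 with rfl | hb
  · exact Or.inr (zero_mem _)
  refine (hR (a / b)).imp (fun h => ?_) fun h => ?_
  · exact Submodule.mem_span_singleton.2 ⟨⟨_, h⟩, div_mul_cancel₀ a hb⟩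
  · exact Submodule.mem_span_singleton.2 ⟨⟨_, h⟩, by simp [Subring.smul_def, ha]⟩

theorem exists_inf_sup_eq_mul_diagonal (hR : ∀ x : F, x ∈ R ∨ x⁻¹ ∈ R) {B : Matrix ι ι F}
    (hB : B.det ≠ 0) (a b : ι → F) :
    ∃ c d : ι → F, (∀ j, c j * d j = a j * b j) ∧
      colSpan R (B * diagonal a) ⊓ colSpan R (B * diagonal b) = colSpan R (B * diagonal c) ∧
      colSpan R (B * diagonal a) ⊔ colSpan R (B * diagonal b) = colSpan R (B * diagonal d) := by
  have hcoord : ∀ j, ∃ c d : F, c * d = a j * b j ∧ (c = a j ∨ c = b j) ∧ (d = a j ∨ d = b j) ∧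
      c ∈ R ∙ a j ∧ c ∈ R ∙ b j ∧ a j ∈ R ∙ d ∧ b j ∈ R ∙ d := fun j => by
    rcases mem_span_singleton_total hR (b j) (a j) with h | h
    · exact ⟨b j, a j, mul_comm _ _, .inr rfl, .inl rfl, h, Submodule.mem_span_singleton_self _,
        Submodule.mem_span_singleton_self _, h⟩
    · exact ⟨a j, b j, rfl, .inl rfl, .inr rfl, Submodule.mem_span_singleton_self _, h, h,
        Submodule.mem_span_singleton_self _⟩
  choose c d hcd hc hd hca hcb had hbd using hcoord
  exact ⟨c, d, hcd, colSpan_mul_diagonal_inf hB hc hca hcb, colSpan_mul_diagonal_sup B hd had hbd⟩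

end ColumnLattices

theorem RatFunc.intDegree_X_pow {K : Type*} [Field K] (n : ℕ) :
    ((RatFunc.X : RatFunc K) ^ n).intDegree = n := by
  rw [← RatFunc.algebraMap_X, ← map_pow, RatFunc.intDegree_polynomial, Polynomial.natDegree_X_pow]

namespace properSubring

variable {K : Type*} [Field K]

theorem mem_iff {f : RatFunc K} : f ∈ properSubring K ↔ f.intDegree ≤ 0 := Iff.rfl

theorem mem_or_inv_mem (f : RatFunc K) : f ∈ properSubring K ∨ f⁻¹ ∈ properSubring K := by
  rw [mem_iff, mem_iff, RatFunc.intDegree_inv]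
  omega

theorem isUnit_iff {u : properSubring K} :
    IsUnit u ↔ (u : RatFunc K) ≠ 0 ∧ (u : RatFunc K).intDegree = 0 := by
  refine ⟨fun hu => ⟨by simpa using hu.ne_zero, ?_⟩, fun ⟨hu0, hdeg⟩ => ?_⟩
  · obtain ⟨v, huv⟩ := hu.exists_right_inv
    have h1 : (u : RatFunc K) * v = 1 := congrArg Subtype.val huv
    have := RatFunc.intDegree_mul (left_ne_zero_of_mul_eq_one h1) (right_ne_zero_of_mul_eq_one h1)
    rw [h1, RatFunc.intDegree_one] at this
    linarith [mem_iff.1 u.2, mem_iff.1 v.2]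
  · have hinv : (u : RatFunc K)⁻¹ ∈ properSubring K := by
      rw [mem_iff, RatFunc.intDegree_inv, hdeg, neg_zero]
    exact .of_mul_eq_one ⟨_, hinv⟩ (Subtype.ext (mul_inv_cancel₀ hu0))

noncomputable def uniformizer : properSubring K :=
  ⟨RatFunc.X⁻¹, by rw [mem_iff, RatFunc.intDegree_inv, RatFunc.intDegree_X]; omega⟩

theorem irreducible_uniformizer : Irreducible (uniformizer (K := K)) := by
  have hdeg : ((uniformizer : properSubring K) : RatFunc K).intDegree = -1 := by
    simp [uniformizer, RatFunc.intDegree_inv, RatFunc.intDegree_X]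
  refine ⟨fun h => by simp [isUnit_iff.1 h |>.2] at hdeg, fun a b hab => ?_⟩
  have h1 : ((uniformizer : properSubring K) : RatFunc K) = a * b := by rw [hab, Subring.coe_mul]
  have hab0 : (a : RatFunc K) * b ≠ 0 := h1 ▸ (by simp [uniformizer, RatFunc.X_ne_zero])
  have := RatFunc.intDegree_mul (left_ne_zero_of_mul hab0) (right_ne_zero_of_mul hab0)
  rw [← h1, hdeg] at this
  rcases (mem_iff.1 a.2).lt_or_eq with ha | ha
  · exact Or.inr (isUnit_iff.2 ⟨right_ne_zero_of_mul hab0, by linarith [mem_iff.1 b.2]⟩)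
  · exact Or.inl (isUnit_iff.2 ⟨left_ne_zero_of_mul hab0, ha⟩)

theorem associated_uniformizer_pow {x : properSubring K} (hx : x ≠ 0) :
    Associated (uniformizer ^ (-(x : RatFunc K).intDegree).toNat) x := by
  set n := (-(x : RatFunc K).intDegree).toNat
  have hx0 : (x : RatFunc K) ≠ 0 := by simpa using hx
  have hXn : (RatFunc.X : RatFunc K) ^ n ≠ 0 := pow_ne_zero _ RatFunc.X_ne_zero
  have hn : (n : ℤ) = -(x : RatFunc K).intDegree :=
    Int.toNat_of_nonneg (by linarith [mem_iff.1 x.2])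
  have hdeg : ((x : RatFunc K) * RatFunc.X ^ n).intDegree = 0 := by
    rw [RatFunc.intDegree_mul hx0 hXn, RatFunc.intDegree_X_pow]
    omega
  have hu : IsUnit (⟨_, hdeg.le⟩ : properSubring K) := isUnit_iff.2 ⟨mul_ne_zero hx0 hXn, hdeg⟩
  refine ⟨hu.unit, Subtype.ext ?_⟩
  rw [Subring.coe_mul, IsUnit.unit_spec, SubmonoidClass.coe_pow]
  change (RatFunc.X : RatFunc K)⁻¹ ^ n * ((x : RatFunc K) * RatFunc.X ^ n) = (x : RatFunc K)
  rw [inv_pow, mul_comm, mul_assoc, mul_inv_cancel₀ hXn, mul_one]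

instance : IsDiscreteValuationRing (properSubring K) :=
  IsDiscreteValuationRing.ofHasUnitMulPowIrreducibleFactorization
    ⟨uniformizer, irreducible_uniformizer, fun hx => ⟨_, associated_uniformizer_pow hx⟩⟩

instance : IsFractionRing (properSubring K) (RatFunc K) := by
  refine .of_field _ _ fun z => ?_
  rcases mem_or_inv_mem z with hz | hz
  · exact ⟨⟨z, hz⟩, 1, by rw [map_one, div_one]; rfl⟩
  · exact ⟨1, ⟨z⁻¹, hz⟩, by rw [map_one, one_div]; exact (inv_inv z).symm⟩

end properSubring

section Degree

variable {K : Type*} [Field K] {n : ℕ}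

theorem intDegree_det_le_of_colSpan_le {P Q : Matrix (Fin n) (Fin n) (RatFunc K)}
    (hP : P.det ≠ 0) (h : colSpan (properSubring K) P ≤ colSpan (properSubring K) Q) :
    P.det.intDegree ≤ Q.det.intDegree := by
  obtain ⟨A, rfl⟩ := colSpan_le_iff.1 h
  rw [det_mul, ← RingHom.map_det] at hP ⊢
  rw [RatFunc.intDegree_mul (left_ne_zero_of_mul hP) (right_ne_zero_of_mul hP)]
  have hA : ((properSubring K).subtype A.det).intDegree ≤ 0 := A.det.2
  omega

theorem intDegree_det_lt_of_colSpan_lt {P Q : Matrix (Fin n) (Fin n) (RatFunc K)}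
    (hP : P.det ≠ 0) (h : colSpan (properSubring K) P < colSpan (properSubring K) Q) :
    P.det.intDegree < Q.det.intDegree := by
  obtain ⟨A, rfl⟩ := colSpan_le_iff.1 h.le
  rw [det_mul, ← RingHom.map_det] at hP ⊢
  have hA0 := right_ne_zero_of_mul hP
  rw [RatFunc.intDegree_mul (left_ne_zero_of_mul hP) hA0]
  have hA : ((properSubring K).subtype A.det).intDegree ≤ 0 := A.det.2
  have hA' : ((properSubring K).subtype A.det).intDegree ≠ 0 := fun h0 =>
    h.ne <| colSpan_mul_of_isUnit Q <|
      (A.isUnit_iff_isUnit_det).2 (properSubring.isUnit_iff.2 ⟨hA0, h0⟩)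
  omega

theorem degMod_colSpan {P : Matrix (Fin n) (Fin n) (RatFunc K)} (hP : P.det ≠ 0) :
    degMod (colSpan (properSubring K) P) = P.det.intDegree := by
  have h : IsFullFree (colSpan (properSubring K) P) := ⟨P, hP, rfl⟩
  obtain ⟨hP', hPP'⟩ := Classical.choose_spec h
  rw [degMod, dif_pos h]
  exact le_antisymm (intDegree_det_le_of_colSpan_le hP' hPP'.ge)
    (intDegree_det_le_of_colSpan_le hP hPP'.le)

theorem IsFullFree.exists_colSpan_eq_mul_diagonal
    {L M : Submodule (properSubring K) (Fin n → RatFunc K)} (hL : IsFullFree L)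
    (hM : IsFullFree M) :
    ∃ (B : Matrix (Fin n) (Fin n) (RatFunc K)) (e : Fin n → RatFunc K),
      B.det ≠ 0 ∧ (B * diagonal e).det ≠ 0 ∧
      L = colSpan (properSubring K) B ∧ M = colSpan (properSubring K) (B * diagonal e) := by
  obtain ⟨P, hP, rfl⟩ := hL
  obtain ⟨Q, hQ, rfl⟩ := hM
  obtain ⟨B, e, hPB, hQB⟩ := _root_.exists_colSpan_eq_mul_diagonal (R := properSubring K) hP hQ
  exact ⟨B, e, det_ne_zero_of_colSpan_le hP hPB.le, det_ne_zero_of_colSpan_le hQ hQB.le, hPB, hQB⟩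

end Degree

/-- The full-rank free `K(t)⁻`-submodules of `K(t)ⁿ` form a modular lattice under inclusion,
where meet is intersection and join is sum, and `deg` is a valuation on it:
`deg L + deg M = deg (L ∩ M) + deg (L + M)`, and `L ⊊ M` implies `deg L < deg M`. -/
theorem fullFree_modular_lattice_valuation {K : Type*} [Field K] {n : ℕ}
    (L M : Submodule (properSubring K) (Fin n → RatFunc K))
    (hL : IsFullFree L) (hM : IsFullFree M) :
    IsFullFree (L ⊓ M) ∧ IsFullFree (L ⊔ M) ∧
    ((L ⊓ M : Submodule (properSubring K) (Fin n → RatFunc K)) : Set (Fin n → RatFunc K)) =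
      (L : Set (Fin n → RatFunc K)) ∩ (M : Set (Fin n → RatFunc K)) ∧
    ((L ⊔ M : Submodule (properSubring K) (Fin n → RatFunc K)) : Set (Fin n → RatFunc K)) =
      {v | ∃ a ∈ L, ∃ b ∈ M, a + b = v} ∧
    degMod L + degMod M = degMod (L ⊓ M) + degMod (L ⊔ M) ∧
    (L < M → degMod L < degMod M) ∧
    (∀ N : Submodule (properSubring K) (Fin n → RatFunc K),
      IsFullFree N → L ≤ N → L ⊔ (M ⊓ N) = (L ⊔ M) ⊓ N) := by
  obtain ⟨B, e, hB, hBe, rfl, rfl⟩ := hL.exists_colSpan_eq_mul_diagonal hM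
  obtain ⟨g, h, hgh, hinf, hsup⟩ :=
    exists_inf_sup_eq_mul_diagonal properSubring.mem_or_inv_mem hB (fun _ => 1) e
  simp only [one_mul, diagonal_one, Matrix.mul_one] at hgh hinf hsup
  have hdet : (B * diagonal g).det * (B * diagonal h).det = B.det * (B * diagonal e).det := by
    simp only [det_mul, det_diagonal, ← hgh, Finset.prod_mul_distrib]
    ring
  have hBgh : (B * diagonal g).det * (B * diagonal h).det ≠ 0 := hdet ▸ mul_ne_zero hB hBe
  have hBg := left_ne_zero_of_mul hBgh
  have hBh := right_ne_zero_of_mul hBgh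
  refine ⟨⟨_, hBg, hinf⟩, ⟨_, hBh, hsup⟩, rfl, Set.ext fun v => Submodule.mem_sup, ?_,
    fun hlt => ?_, fun N _ hLN => (sup_inf_assoc_of_le _ hLN).symm⟩
  · rw [hinf, hsup, degMod_colSpan hB, degMod_colSpan hBe, degMod_colSpan hBg, degMod_colSpan hBh,
      ← RatFunc.intDegree_mul hB hBe, ← hdet, RatFunc.intDegree_mul hBg hBh]
  · rw [degMod_colSpan hB, degMod_colSpan hBe]
    exact intDegree_det_lt_of_colSpan_lt hB hlt
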